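/- arXiv:1902.06094 — 4 statements merged into one kernel-verified Lean document; each statement's English description precedes it below -/
import Mathlib

section
/- For any family {A_t}_{t ∈ ℤ₋} of subsets of ℝⁿ such that ∏_{t ∈ ℤ₋} A_t ⊆ ℓ^w_-(ℝⁿ), the closure in (ℓ^w_-(ℝⁿ), ‖·‖_w) of the product set satisfies closure(∏_{t∈ℤ₋} A_t) = ∏_{t∈ℤ₋} closure(A_t) (intersected with ℓ^w_-(ℝⁿ)). -/
open Filter
open scoped ENNReal NNReal

/-- A weighting sequence: strictly decreasing, valued in `(0,1]`, with `w 0 = 1`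
and zero limit. Sequences `z : ℤ₋ → ℝⁿ` are represented as `z : ℕ → (Fin n → ℝ)`,
where index `t : ℕ` stands for the time `-t`, so `w_{-t}` is `w t`. -/
def IsWeighting (w : ℕ → ℝ) : Prop :=
  StrictAnti w ∧ (∀ t, 0 < w t) ∧ (∀ t, w t ≤ 1) ∧ w 0 = 1 ∧
    Tendsto w atTop (nhds 0)

/-- Membership in the weighted space `ℓ^w_-`: finite weighted sup norm. -/
def memLw {E : Type*} [NormedAddCommGroup E] (w : ℕ → ℝ) (z : ℕ → E) : Prop :=
  BddAbove (Set.range fun t => ‖z t‖ * w t)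

/-- The (extended) distance associated to the weighted norm `‖·‖_w`. -/
noncomputable def wEDist {E : Type*} [NormedAddCommGroup E] (w : ℕ → ℝ) (z u : ℕ → E) :
    ℝ≥0∞ :=
  ⨆ t, edist (z t) (u t) * ENNReal.ofReal (w t)

/-- The metric closure of a set `S ⊆ ℓ^w_-` for the weighted norm. -/
def wClosure {E : Type*} [NormedAddCommGroup E] (w : ℕ → ℝ) (S : Set (ℕ → E)) :
    Set (ℕ → E) :=
  {u | ∀ ε : ℝ, 0 < ε → ∃ s ∈ S, wEDist w u s < ENNReal.ofReal ε}

/-! The product of the closures is reached by choosing, coordinatewise, points of `A t` that are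
uniformly `ε`-close; since `w ≤ 1` this is `ε`-close in the weighted distance. Conversely, weighted
closeness controls each coordinate because `w t > 0`, and a point within weighted distance `1` of
an element of `ℓ^w_-` is itself in `ℓ^w_-`. -/

section WeightedClosure

variable {E : Type*} [NormedAddCommGroup E] {w : ℕ → ℝ}

theorem edist_mul_le_wEDist (z u : ℕ → E) (t : ℕ) :
    edist (z t) (u t) * ENNReal.ofReal (w t) ≤ wEDist w z u :=
  le_iSup (fun t => edist (z t) (u t) * ENNReal.ofReal (w t)) t

theorem dist_mul_lt_of_wEDist_lt {z u : ℕ → E} {ε : ℝ} (hε : 0 < ε)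
    (h : wEDist w z u < ENNReal.ofReal ε) (t : ℕ) : dist (z t) (u t) * w t < ε := by
  have hlt := (edist_mul_le_wEDist (w := w) z u t).trans_lt h
  by_cases hwt : 0 ≤ w t
  · rwa [edist_dist, ← ENNReal.ofReal_mul dist_nonneg, ENNReal.ofReal_lt_ofReal_iff hε] at hlt
  · nlinarith [dist_nonneg (x := z t) (y := u t)]

theorem wEDist_le_of_forall_dist_le (hw : ∀ t, w t ≤ 1) {z u : ℕ → E} {δ : ℝ}
    (h : ∀ t, dist (z t) (u t) ≤ δ) : wEDist w z u ≤ ENNReal.ofReal δ :=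
  iSup_le fun t => calc
    edist (z t) (u t) * ENNReal.ofReal (w t) ≤ ENNReal.ofReal δ * 1 := by
      rw [edist_dist]
      exact mul_le_mul' (ENNReal.ofReal_le_ofReal (h t)) (ENNReal.ofReal_le_one.2 (hw t))
    _ = ENNReal.ofReal δ := mul_one _

theorem apply_mem_closure_of_mem_wClosure {A : ℕ → Set E} {u : ℕ → E}
    (hu : u ∈ wClosure w {z | ∀ t, z t ∈ A t}) {t : ℕ} (hwt : 0 < w t) :
    u t ∈ closure (A t) := by
  refine Metric.mem_closure_iff.2 fun δ hδ => ?_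
  obtain ⟨s, hs, hus⟩ := hu (δ * w t) (mul_pos hδ hwt)
  exact ⟨s t, hs t, lt_of_mul_lt_mul_right (dist_mul_lt_of_wEDist_lt (by positivity) hus t) hwt.le⟩

theorem memLw_of_mem_wClosure (hw : ∀ t, 0 ≤ w t) {S : Set (ℕ → E)}
    (hS : ∀ z ∈ S, memLw w z) {u : ℕ → E} (hu : u ∈ wClosure w S) : memLw w u := by
  obtain ⟨s, hs, hus⟩ := hu 1 one_pos
  obtain ⟨M, hM⟩ := hS s hs
  refine ⟨M + 1, ?_⟩
  rintro _ ⟨t, rfl⟩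
  have hst : ‖s t‖ * w t ≤ M := hM ⟨t, rfl⟩
  have hnorm : ‖u t‖ ≤ dist (u t) (s t) + ‖s t‖ := by
    simpa [dist_eq_norm] using norm_le_norm_sub_add (u t) (s t)
  calc ‖u t‖ * w t ≤ (dist (u t) (s t) + ‖s t‖) * w t := mul_le_mul_of_nonneg_right hnorm (hw t)
    _ = dist (u t) (s t) * w t + ‖s t‖ * w t := add_mul _ _ _
    _ ≤ M + 1 := by linarith [dist_mul_lt_of_wEDist_lt one_pos hus t]

theorem mem_wClosure_of_forall_mem_closure (hw : ∀ t, w t ≤ 1) {A : ℕ → Set E} {u : ℕ → E}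
    (hu : ∀ t, u t ∈ closure (A t)) : u ∈ wClosure w {z | ∀ t, z t ∈ A t} := by
  intro ε hε
  choose s hsA hsu using fun t => Metric.mem_closure_iff.1 (hu t) (ε / 2) (half_pos hε)
  refine ⟨s, hsA, (wEDist_le_of_forall_dist_le hw fun t => (hsu t).le).trans_lt ?_⟩
  exact (ENNReal.ofReal_lt_ofReal_iff hε).2 (half_lt_self hε)

end WeightedClosure

/-- If the product set `∏_t A_t` is contained in `ℓ^w_-(ℝⁿ)`, then its closure in
`(ℓ^w_-(ℝⁿ), ‖·‖_w)` is the product of the closures of the `A_t` (intersected with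
`ℓ^w_-(ℝⁿ)`). -/
theorem closure_of_product (n : ℕ) (w : ℕ → ℝ) (hw : IsWeighting w)
    (A : ℕ → Set (Fin n → ℝ))
    (hA : ∀ z : ℕ → (Fin n → ℝ), (∀ t, z t ∈ A t) → memLw w z) :
    wClosure w {z : ℕ → (Fin n → ℝ) | ∀ t, z t ∈ A t}
      = {z : ℕ → (Fin n → ℝ) | (∀ t, z t ∈ closure (A t)) ∧ memLw w z} := by
  obtain ⟨-, hpos, hle_one, -, -⟩ := hw
  ext u
  exact ⟨fun hu => ⟨fun _ => apply_mem_closure_of_mem_wClosure hu (hpos _),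
      memLw_of_mem_wClosure (fun t => (hpos t).le) hA hu⟩,
    fun hu => mem_wClosure_of_forall_mem_closure hle_one hu.1⟩
end

section
/- Let w¹, w² be weighting sequences, V ⊆ ℓ^{w¹}_-(ℝⁿ) a time-invariant set, and H : V → ℝᴺ a Lipschitz functional with constant c_H. Suppose V contains a point z⁰ with U_H(z⁰) ∈ ℓ^{w²}_-(ℝᴺ), where U_H(z)_t := H(T_{-t}(z)). If R_{w¹,w²} := sup_{s,t∈ℕ} (w¹_t w²_s)/(w¹_{t+s}) < ∞, then U_H maps V into ℓ^{w²}_-(ℝᴺ) and is Lipschitz continuous with constant R_{w¹,w²} · c_H with respect to (‖·‖_{w¹}, ‖·‖_{w²}). -/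
open Filter
open scoped ENNReal NNReal

/-- The weighted norm `‖z‖_w = sup_t ‖z_t‖ w_{-t}`. -/
noncomputable def wNorm {E : Type*} [NormedAddCommGroup E] (w : ℕ → ℝ) (z : ℕ → E) : ℝ :=
  ⨆ t, ‖z t‖ * w t

/-- From a Lipschitz functional to a Lipschitz filter. Let `V ⊆ ℓ^{w¹}_-(ℝⁿ)` be
time-invariant (invariant under all backward shifts `T_{-t}`, here
`z ↦ fun j => z (j + k)`), `H : V → ℝᴺ` Lipschitz with constant `cH`, and suppose
`U_H(z⁰) ∈ ℓ^{w²}_-(ℝᴺ)` for some `z⁰ ∈ V`, where `U_H(z)_t = H(T_{-t} z)`. If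
`R = sup_{s,t} w¹_t w²_s / w¹_{t+s}` is finite (stated as: `R` is an upper bound),
then `U_H` maps `V` into `ℓ^{w²}_-(ℝᴺ)` and is Lipschitz with constant `R · cH`. -/
theorem functional_to_filter_lipschitz (n N : ℕ) (w1 w2 : ℕ → ℝ)
    (hw1 : IsWeighting w1) (hw2 : IsWeighting w2)
    (V : Set (ℕ → (Fin n → ℝ))) (hVsub : ∀ z ∈ V, memLw w1 z)
    (hVinv : ∀ k : ℕ, (fun z : ℕ → (Fin n → ℝ) => fun j => z (j + k)) '' V = V)
    (H : (ℕ → (Fin n → ℝ)) → (Fin N → ℝ)) (cH : ℝ)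
    (hH : ∀ z1 ∈ V, ∀ z2 ∈ V, ‖H z1 - H z2‖ ≤ cH * wNorm w1 (z1 - z2))
    (z0 : ℕ → (Fin n → ℝ)) (hz0 : z0 ∈ V)
    (hUz0 : memLw w2 (fun k => H (fun j => z0 (j + k))))
    (R : ℝ) (hR : ∀ s t : ℕ, w1 t * w2 s / w1 (t + s) ≤ R) :
    (∀ z ∈ V, memLw w2 (fun k => H (fun j => z (j + k)))) ∧
    (∀ z1 ∈ V, ∀ z2 ∈ V,
      wNorm w2 ((fun k => H (fun j => z1 (j + k))) - (fun k => H (fun j => z2 (j + k))))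
        ≤ R * cH * wNorm w1 (z1 - z2)) := by
  obtain ⟨hw1a, hw1pos, hw1le, hw1zero, -⟩ := hw1
  obtain ⟨hw2a, hw2pos, hw2le, hw2zero, -⟩ := hw2
  have hR0 : 0 < R := by
    have := hR 0 0
    rw [hw1zero, hw2zero] at this
    norm_num at this
    linarith
  -- difference of elements of V is in ℓ^{w1}
  have hmemsub : ∀ z1 ∈ V, ∀ z2 ∈ V, memLw w1 (z1 - z2) := by
    intro z1 h1 z2 h2
    obtain ⟨M1, hM1⟩ := hVsub z1 h1
    obtain ⟨M2, hM2⟩ := hVsub z2 h2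
    refine ⟨M1 + M2, ?_⟩
    rintro x ⟨t, rfl⟩
    have e1 : ‖z1 t‖ * w1 t ≤ M1 := hM1 (Set.mem_range_self t)
    have e2 : ‖z2 t‖ * w1 t ≤ M2 := hM2 (Set.mem_range_self t)
    have hn : ‖(z1 - z2) t‖ ≤ ‖z1 t‖ + ‖z2 t‖ := by
      simpa [Pi.sub_apply] using norm_sub_le (z1 t) (z2 t)
    have h' := mul_le_mul_of_nonneg_right hn (le_of_lt (hw1pos t))
    show ‖(z1 - z2) t‖ * w1 t ≤ M1 + M2
    nlinarith
  -- shifts stay in V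
  have hshift : ∀ z ∈ V, ∀ k : ℕ, (fun j => z (j + k)) ∈ V := by
    intro z hz k
    rw [← hVinv k]
    exact ⟨z, hz, rfl⟩
  by_cases hcH : 0 ≤ cH
  · -- main case
    have key : ∀ z1 ∈ V, ∀ z2 ∈ V, ∀ k : ℕ,
        ‖H (fun j => z1 (j + k)) - H (fun j => z2 (j + k))‖ * w2 k
          ≤ R * cH * wNorm w1 (z1 - z2) := by
      intro z1 h1 z2 h2 k
      set d := z1 - z2 with hd
      have hbd : memLw w1 d := hmemsub z1 h1 z2 h2
      have hd0 : 0 ≤ wNorm w1 d := by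
        have h0 : (0:ℝ) ≤ ‖d 0‖ * w1 0 := by positivity
        exact h0.trans (le_ciSup hbd 0)
      have hdiffeq : (fun j => z1 (j + k)) - (fun j => z2 (j + k))
          = fun j => d (j + k) := by
        funext j; simp [hd, Pi.sub_apply]
      have hterm : ∀ j, ‖d (j + k)‖ * w1 j ≤ R * wNorm w1 d / w2 k := by
        intro j
        rw [le_div_iff₀ (hw2pos k)]
        have hw : w1 j * w2 k ≤ R * w1 (j + k) := by
          have := hR k j
          rw [div_le_iff₀ (hw1pos (j + k))] at this
          linarith
        have h1' : ‖d (j + k)‖ * (w1 j * w2 k) ≤ ‖d (j + k)‖ * (R * w1 (j + k)) :=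
          mul_le_mul_of_nonneg_left hw (norm_nonneg _)
        have h3 : ‖d (j + k)‖ * w1 (j + k) ≤ wNorm w1 d := le_ciSup hbd (j + k)
        nlinarith [norm_nonneg (d (j + k))]
      have hsup : wNorm w1 (fun j => d (j + k)) ≤ R * wNorm w1 d / w2 k :=
        ciSup_le hterm
      have hHle : ‖H (fun j => z1 (j + k)) - H (fun j => z2 (j + k))‖
          ≤ cH * wNorm w1 (fun j => d (j + k)) := by
        have := hH _ (hshift z1 h1 k) _ (hshift z2 h2 k)
        rwa [hdiffeq] at this
      calc ‖H (fun j => z1 (j + k)) - H (fun j => z2 (j + k))‖ * w2 k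
          ≤ (cH * wNorm w1 (fun j => d (j + k))) * w2 k :=
            mul_le_mul_of_nonneg_right hHle (le_of_lt (hw2pos k))
        _ ≤ (cH * (R * wNorm w1 d / w2 k)) * w2 k := by
            have := mul_le_mul_of_nonneg_left hsup hcH
            exact mul_le_mul_of_nonneg_right this (le_of_lt (hw2pos k))
        _ = R * cH * wNorm w1 d := by
            field_simp [(hw2pos k).ne']
    constructor
    · intro z hz
      obtain ⟨M0, hM0⟩ := hUz0
      refine ⟨R * cH * wNorm w1 (z - z0) + M0, ?_⟩
      rintro x ⟨k, rfl⟩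
      have e0 : ‖H (fun j => z0 (j + k))‖ * w2 k ≤ M0 := hM0 (Set.mem_range_self k)
      have ekey := key z hz z0 hz0 k
      have hn : ‖H (fun j => z (j + k))‖
          ≤ ‖H (fun j => z (j + k)) - H (fun j => z0 (j + k))‖
            + ‖H (fun j => z0 (j + k))‖ := by
        calc ‖H (fun j => z (j + k))‖
            = ‖(H (fun j => z (j + k)) - H (fun j => z0 (j + k)))
                + H (fun j => z0 (j + k))‖ := by rw [sub_add_cancel]
          _ ≤ _ := norm_add_le _ _
      have h' := mul_le_mul_of_nonneg_right hn (le_of_lt (hw2pos k))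
      rw [add_mul] at h'
      show ‖H (fun j => z (j + k))‖ * w2 k ≤ R * cH * wNorm w1 (z - z0) + M0
      linarith
    · intro z1 h1 z2 h2
      refine ciSup_le fun k => ?_
      have := key z1 h1 z2 h2 k
      simpa [Pi.sub_apply] using this
  · -- degenerate case : cH < 0 forces V to be a subsingleton
    have hsing : ∀ z1 ∈ V, ∀ z2 ∈ V, z1 = z2 := by
      intro z1 h1 z2 h2
      by_contra hne
      have : ∃ t, z1 t ≠ z2 t := by
        by_contra h; push_neg at h; exact hne (funext h)
      obtain ⟨t, ht⟩ := this
      have hbd : memLw w1 (z1 - z2) := hmemsub z1 h1 z2 h2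
      have hpos : 0 < wNorm w1 (z1 - z2) := by
        have h1' : 0 < ‖(z1 - z2) t‖ * w1 t := by
          apply mul_pos _ (hw1pos t)
          rw [norm_pos_iff]
          simp [Pi.sub_apply, sub_eq_zero, ht]
        exact h1'.trans_le (le_ciSup hbd t)
      have hHle := hH z1 h1 z2 h2
      nlinarith [norm_nonneg (H z1 - H z2),
        mul_neg_of_neg_of_pos (lt_of_not_ge hcH) hpos]
    constructor
    · intro z hz
      rw [hsing z hz z0 hz0]
      exact hUz0
    · intro z1 h1 z2 h2
      have e := hsing z1 h1 z2 h2
      subst e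
      simp [wNorm, sub_self]
end

section
/- Let F : D_N × D_n → D_N be Lipschitz continuous and a contraction in its first argument with constant 0 < c < 1, let w be a weighting sequence with finite inverse decay ratio L_w satisfying c·L_w < 1, and suppose (D_N)^{ℤ₋} ∩ ℓ^w_-(ℝᴺ) is complete and the system x_t = F(x_{t-1}, z_t) admits at least one solution (x⁰, z⁰) with x⁰ ∈ ℓ^w_-(ℝᴺ), z⁰ ∈ V_n ⊆ (D_n)^{ℤ₋} ∩ ℓ^w_-(ℝⁿ). Then for every input z ∈ V_n there exists a unique x ∈ (D_N)^{ℤ₋} ∩ ℓ^w_-(ℝᴺ) with x_t = F(x_{t-1}, z_t) for all t ≤ 0 (echo state property), and the resulting map U^F : V_n → ℓ^w_-(ℝᴺ) is continuous with respect to ‖·‖_w on domain and target. -/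
open Filter
open scoped ENNReal NNReal

/-! For a fixed input `z`, the solutions are the fixed points of the map
`x ↦ (F(x_{t-1}, z_t))_t`. It shifts time by one step, which costs at most a factor `L_w` in the
weighted norm, so it is a `c L_w`-contraction of `D_N^{ℤ₋} ∩ ℓ^w_-`; the reference solution
`(x⁰, z⁰)` shows that it maps this set into itself. Banach's fixed point argument gives the echo
state property, and comparing the fixed-point equations for two inputs gives
`‖x - x'‖_w (1 - c L_w) ≤ K ‖z - z'‖_w` with `K` a Lipschitz constant of `F` in the input, so
the filter is even Lipschitz. -/

open Function Set Topology

/-- The paper's `D^{ℤ₋} ∩ ℓ^w_-`. -/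
def lwSet {E : Type*} [NormedAddCommGroup E] (w : ℕ → ℝ) (D : Set E) : Set (ℕ → E) :=
  {x | (∀ t, x t ∈ D) ∧ memLw w x}

section WeightedNorm

variable {E : Type*} [NormedAddCommGroup E] {w : ℕ → ℝ} {a b d : ℕ → E}

lemma memLw_of_forall_le {M : ℝ} (h : ∀ k, ‖a k‖ * w k ≤ M) : memLw w a :=
  ⟨M, by rintro _ ⟨k, rfl⟩; exact h k⟩

lemma wNorm_le_of_forall_le {M : ℝ} (h : ∀ k, ‖a k‖ * w k ≤ M) : wNorm w a ≤ M :=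
  ciSup_le h

lemma norm_mul_le_wNorm (h : memLw w a) (k : ℕ) : ‖a k‖ * w k ≤ wNorm w a :=
  le_ciSup h k

lemma wNorm_sub_comm : wNorm w (a - b) = wNorm w (b - a) := by
  simp only [wNorm, Pi.sub_apply, norm_sub_rev]

lemma wNorm_sub_self : wNorm w (a - a) = 0 := by
  simp [wNorm]

lemma norm_add_mul_le (hw : ∀ t, 0 ≤ w t) (ha : memLw w a) (hb : memLw w b) (k : ℕ) :
    ‖(a + b) k‖ * w k ≤ wNorm w a + wNorm w b :=
  calc ‖(a + b) k‖ * w k ≤ ‖a k‖ * w k + ‖b k‖ * w k := by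
        rw [← add_mul]; exact mul_le_mul_of_nonneg_right (norm_add_le _ _) (hw k)
    _ ≤ wNorm w a + wNorm w b := add_le_add (norm_mul_le_wNorm ha k) (norm_mul_le_wNorm hb k)

lemma memLw.add (hw : ∀ t, 0 ≤ w t) (ha : memLw w a) (hb : memLw w b) : memLw w (a + b) :=
  memLw_of_forall_le (norm_add_mul_le hw ha hb)

lemma memLw.neg (ha : memLw w a) : memLw w (-a) := by
  simpa only [memLw, Pi.neg_apply, norm_neg] using ha

lemma memLw.sub (hw : ∀ t, 0 ≤ w t) (ha : memLw w a) (hb : memLw w b) : memLw w (a - b) := by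
  simpa only [sub_eq_add_neg] using ha.add hw hb.neg

lemma wNorm_add_le (hw : ∀ t, 0 ≤ w t) (ha : memLw w a) (hb : memLw w b) :
    wNorm w (a + b) ≤ wNorm w a + wNorm w b :=
  wNorm_le_of_forall_le (norm_add_mul_le hw ha hb)

lemma wNorm_sub_le_wNorm_sub_add_wNorm_sub (hw : ∀ t, 0 ≤ w t) (hab : memLw w (a - b))
    (hbd : memLw w (b - d)) : wNorm w (a - d) ≤ wNorm w (a - b) + wNorm w (b - d) := by
  simpa only [sub_add_sub_cancel] using wNorm_add_le hw hab hbd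

lemma norm_succ_mul_le_wNorm (hw : ∀ t, 0 < w t) {Lw : ℝ} (hLw : ∀ t, w t / w (t + 1) ≤ Lw)
    (ha : memLw w a) (k : ℕ) : ‖a (k + 1)‖ * w k ≤ Lw * wNorm w a :=
  calc ‖a (k + 1)‖ * w k = w k / w (k + 1) * (‖a (k + 1)‖ * w (k + 1)) := by
        field_simp [(hw (k + 1)).ne']
    _ ≤ Lw * wNorm w a := mul_le_mul (hLw k) (norm_mul_le_wNorm ha (k + 1))
        (mul_nonneg (norm_nonneg _) (hw _).le) ((div_nonneg (hw k).le (hw _).le).trans (hLw k))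

lemma eq_of_wNorm_sub_nonpos (hw : ∀ t, 0 < w t) (hab : memLw w (a - b))
    (h : wNorm w (a - b) ≤ 0) : a = b := by
  funext k
  have hk : ‖a k - b k‖ * w k ≤ 0 := (norm_mul_le_wNorm hab k).trans h
  exact sub_eq_zero.1 (norm_le_zero_iff.1 (nonpos_of_mul_nonpos_left hk (hw k)))

end WeightedNorm

section Contraction

variable {E : Type*} [NormedAddCommGroup E] {w : ℕ → ℝ} {S : Set (ℕ → E)}
  {Φ : (ℕ → E) → ℕ → E} {q : ℝ}

lemma wNorm_sub_mul_le_of_contracting (hw : ∀ t, 0 ≤ w t) (hS : ∀ a ∈ S, memLw w a)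
    (hmaps : MapsTo Φ S S) (hΦ : ∀ a ∈ S, ∀ b ∈ S, wNorm w (Φ a - Φ b) ≤ q * wNorm w (a - b))
    {a b : ℕ → E} (ha : a ∈ S) (hb : b ∈ S) :
    wNorm w (a - b) * (1 - q) ≤ wNorm w (a - Φ a) + wNorm w (b - Φ b) := by
  have hsub : ∀ x ∈ S, ∀ y ∈ S, memLw w (x - y) := fun x hx y hy => (hS x hx).sub hw (hS y hy)
  have h₁ := wNorm_sub_le_wNorm_sub_add_wNorm_sub hw
    (hsub _ ha _ (hmaps ha)) (hsub _ (hmaps ha) _ hb)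
  have h₂ := wNorm_sub_le_wNorm_sub_add_wNorm_sub hw
    (hsub _ (hmaps ha) _ (hmaps hb)) (hsub _ (hmaps hb) _ hb)
  rw [wNorm_sub_comm (a := Φ b)] at h₂
  linarith [hΦ a ha b hb]

lemma wNorm_iterate_sub_succ_le (hmaps : MapsTo Φ S S)
    (hΦ : ∀ a ∈ S, ∀ b ∈ S, wNorm w (Φ a - Φ b) ≤ q * wNorm w (a - b)) (hq : 0 ≤ q)
    {x₀ : ℕ → E} (hx₀ : x₀ ∈ S) (m : ℕ) :
    wNorm w (Φ^[m] x₀ - Φ^[m + 1] x₀) ≤ q ^ m * wNorm w (x₀ - Φ x₀) := by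
  induction m with
  | zero => simp
  | succ m ih =>
    rw [iterate_succ_apply' Φ m, iterate_succ_apply' Φ (m + 1), pow_succ']
    calc wNorm w (Φ (Φ^[m] x₀) - Φ (Φ^[m + 1] x₀))
        ≤ q * wNorm w (Φ^[m] x₀ - Φ^[m + 1] x₀) :=
          hΦ _ (hmaps.iterate m hx₀) _ (hmaps.iterate (m + 1) hx₀)
      _ ≤ q * (q ^ m * wNorm w (x₀ - Φ x₀)) := mul_le_mul_of_nonneg_left ih hq
      _ = q * q ^ m * wNorm w (x₀ - Φ x₀) := (mul_assoc _ _ _).symm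

lemma exists_forall_wNorm_iterate_sub_lt (hw : ∀ t, 0 ≤ w t) (hS : ∀ a ∈ S, memLw w a)
    (hmaps : MapsTo Φ S S) (hΦ : ∀ a ∈ S, ∀ b ∈ S, wNorm w (Φ a - Φ b) ≤ q * wNorm w (a - b))
    (hq₀ : 0 ≤ q) (hq₁ : q < 1) {x₀ : ℕ → E} (hx₀ : x₀ ∈ S) {ε : ℝ} (hε : 0 < ε) :
    ∃ M, ∀ p ≥ M, ∀ r ≥ M, wNorm w (Φ^[p] x₀ - Φ^[r] x₀) < ε := by
  have hlim : Tendsto (fun m => q ^ m * wNorm w (x₀ - Φ x₀)) atTop (𝓝 0) := by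
    simpa using (tendsto_pow_atTop_nhds_zero_of_lt_one hq₀ hq₁).mul_const (wNorm w (x₀ - Φ x₀))
  obtain ⟨M, hM⟩ := eventually_atTop.1 (hlim.eventually (gt_mem_nhds (by positivity :
    0 < ε * (1 - q) / 2)))
  refine ⟨M, fun p hp r hr => ?_⟩
  have hstep : ∀ m, wNorm w (Φ^[m] x₀ - Φ (Φ^[m] x₀)) ≤ q ^ m * wNorm w (x₀ - Φ x₀) := fun m => by
    simpa only [iterate_succ_apply'] using wNorm_iterate_sub_succ_le hmaps hΦ hq₀ hx₀ m
  have hpr := wNorm_sub_mul_le_of_contracting hw hS hmaps hΦ (hmaps.iterate p hx₀)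
    (hmaps.iterate r hx₀)
  refine lt_of_mul_lt_mul_right (hpr.trans_lt ?_) (sub_nonneg.2 hq₁.le)
  linarith [hstep p, hstep r, hM p hp, hM r hr]

lemma isFixedPt_of_tendsto_wNorm_iterate (hw : ∀ t, 0 < w t) (hS : ∀ a ∈ S, memLw w a)
    (hmaps : MapsTo Φ S S) (hΦ : ∀ a ∈ S, ∀ b ∈ S, wNorm w (Φ a - Φ b) ≤ q * wNorm w (a - b))
    {x₀ x : ℕ → E} (hx₀ : x₀ ∈ S) (hx : x ∈ S)
    (hlim : Tendsto (fun m => wNorm w (Φ^[m] x₀ - x)) atTop (𝓝 0)) : IsFixedPt Φ x := by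
  have hw' : ∀ t, 0 ≤ w t := fun t => (hw t).le
  have hbound : ∀ m, wNorm w (Φ x - x) ≤
      q * wNorm w (Φ^[m] x₀ - x) + wNorm w (Φ^[m + 1] x₀ - x) := fun m => by
    have hm := hmaps.iterate m hx₀
    have htri := wNorm_sub_le_wNorm_sub_add_wNorm_sub hw'
      ((hS _ (hmaps hx)).sub hw' (hS _ (hmaps hm))) ((hS _ (hmaps hm)).sub hw' (hS _ hx))
    have hstep : wNorm w (Φ x - Φ (Φ^[m] x₀)) ≤ q * wNorm w (Φ^[m] x₀ - x) :=
      (hΦ x hx _ hm).trans_eq (by rw [wNorm_sub_comm])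
    rw [iterate_succ_apply' Φ m]
    linarith
  have hlim' : Tendsto (fun m => q * wNorm w (Φ^[m] x₀ - x) + wNorm w (Φ^[m + 1] x₀ - x))
      atTop (𝓝 0) := by
    simpa using (hlim.const_mul q).add (hlim.comp (tendsto_add_atTop_nat 1))
  exact eq_of_wNorm_sub_nonpos hw ((hS _ (hmaps hx)).sub hw' (hS _ hx))
    (ge_of_tendsto' hlim' hbound)

lemma existsUnique_isFixedPt_of_contracting (hw : ∀ t, 0 < w t) (hS : ∀ a ∈ S, memLw w a)
    (hcomplete : ∀ u : ℕ → ℕ → E, (∀ m, u m ∈ S) →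
      (∀ ε : ℝ, 0 < ε → ∃ M, ∀ p ≥ M, ∀ r ≥ M, wNorm w (u p - u r) < ε) →
      ∃ x ∈ S, Tendsto (fun m => wNorm w (u m - x)) atTop (𝓝 0))
    (hmaps : MapsTo Φ S S) (hΦ : ∀ a ∈ S, ∀ b ∈ S, wNorm w (Φ a - Φ b) ≤ q * wNorm w (a - b))
    (hq₀ : 0 ≤ q) (hq₁ : q < 1) (hne : S.Nonempty) : ∃! x, x ∈ S ∧ IsFixedPt Φ x := by
  have hw' : ∀ t, 0 ≤ w t := fun t => (hw t).le
  obtain ⟨x₀, hx₀⟩ := hne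
  obtain ⟨x, hx, hlim⟩ := hcomplete (fun m => Φ^[m] x₀) (fun m => hmaps.iterate m hx₀)
    fun ε hε => exists_forall_wNorm_iterate_sub_lt hw' hS hmaps hΦ hq₀ hq₁ hx₀ hε
  refine ⟨x, ⟨hx, isFixedPt_of_tendsto_wNorm_iterate hw hS hmaps hΦ hx₀ hx hlim⟩, ?_⟩
  rintro y ⟨hy, hfix⟩
  have h := wNorm_sub_mul_le_of_contracting hw' hS hmaps hΦ hy hx
  rw [hfix, isFixedPt_of_tendsto_wNorm_iterate hw hS hmaps hΦ hx₀ hx hlim, wNorm_sub_self,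
    wNorm_sub_self, add_zero] at h
  exact eq_of_wNorm_sub_nonpos hw ((hS y hy).sub hw' (hS x hx))
    (nonpos_of_mul_nonpos_left h (by linarith))

end Contraction

section Reservoir

variable {X Z : Type*}

/-- The reservoir system `x_t = F(x_{t-1}, z_t)` read as a map on state sequences. -/
def reservoirMap (F : X → Z → X) (z : ℕ → Z) (x : ℕ → X) : ℕ → X :=
  fun k => F (x (k + 1)) (z k)

lemma isFixedPt_reservoirMap_iff {F : X → Z → X} {z : ℕ → Z} {x : ℕ → X} :
    IsFixedPt (reservoirMap F z) x ↔ ∀ k, x k = F (x (k + 1)) (z k) := by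
  simp only [IsFixedPt, funext_iff, reservoirMap, eq_comm]

variable [NormedAddCommGroup X] [NormedAddCommGroup Z] {F : X → Z → X} {DX : Set X} {DZ : Set Z}
  {w : ℕ → ℝ} {c K Lw : ℝ}

lemma norm_sub_le_of_contracting_of_lipschitz {L : ℝ}
    (hcontr : ∀ x₁ ∈ DX, ∀ x₂ ∈ DX, ∀ z ∈ DZ, ‖F x₁ z - F x₂ z‖ ≤ c * ‖x₁ - x₂‖)
    (hlip : ∀ x₁ ∈ DX, ∀ x₂ ∈ DX, ∀ z₁ ∈ DZ, ∀ z₂ ∈ DZ,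
      ‖F x₁ z₁ - F x₂ z₂‖ ≤ L * (‖x₁ - x₂‖ + ‖z₁ - z₂‖)) (hLK : L ≤ K) :
    ∀ x₁ ∈ DX, ∀ x₂ ∈ DX, ∀ z₁ ∈ DZ, ∀ z₂ ∈ DZ,
      ‖F x₁ z₁ - F x₂ z₂‖ ≤ c * ‖x₁ - x₂‖ + K * ‖z₁ - z₂‖ := by
  intro x₁ hx₁ x₂ hx₂ z₁ hz₁ z₂ hz₂
  have hinput : ‖F x₂ z₁ - F x₂ z₂‖ ≤ K * ‖z₁ - z₂‖ :=
    calc ‖F x₂ z₁ - F x₂ z₂‖ ≤ L * ‖z₁ - z₂‖ := by simpa using hlip x₂ hx₂ x₂ hx₂ z₁ hz₁ z₂ hz₂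
      _ ≤ K * ‖z₁ - z₂‖ := mul_le_mul_of_nonneg_right hLK (norm_nonneg _)
  exact (norm_sub_le_norm_sub_add_norm_sub _ (F x₂ z₁) _).trans
    (add_le_add (hcontr x₁ hx₁ x₂ hx₂ z₁ hz₁) hinput)

lemma norm_reservoirMap_sub_mul_le (hw : ∀ t, 0 < w t) (hLw : ∀ t, w t / w (t + 1) ≤ Lw)
    (hc : 0 ≤ c) (hK : 0 ≤ K) (hF : ∀ x₁ ∈ DX, ∀ x₂ ∈ DX, ∀ z₁ ∈ DZ, ∀ z₂ ∈ DZ,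
      ‖F x₁ z₁ - F x₂ z₂‖ ≤ c * ‖x₁ - x₂‖ + K * ‖z₁ - z₂‖)
    {z₁ z₂ : ℕ → Z} (hz₁ : ∀ t, z₁ t ∈ DZ) (hz₂ : ∀ t, z₂ t ∈ DZ) (hz : memLw w (z₁ - z₂))
    {a b : ℕ → X} (ha : ∀ t, a t ∈ DX) (hb : ∀ t, b t ∈ DX) (hab : memLw w (a - b)) (k : ℕ) :
    ‖(reservoirMap F z₁ a - reservoirMap F z₂ b) k‖ * w k ≤
      c * Lw * wNorm w (a - b) + K * wNorm w (z₁ - z₂) := by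
  have hFk : ‖(reservoirMap F z₁ a - reservoirMap F z₂ b) k‖ ≤
      c * ‖(a - b) (k + 1)‖ + K * ‖(z₁ - z₂) k‖ := hF _ (ha _) _ (hb _) _ (hz₁ k) _ (hz₂ k)
  calc ‖(reservoirMap F z₁ a - reservoirMap F z₂ b) k‖ * w k
      ≤ c * (‖(a - b) (k + 1)‖ * w k) + K * (‖(z₁ - z₂) k‖ * w k) := by
        linarith [mul_le_mul_of_nonneg_right hFk (hw k).le]
    _ ≤ c * (Lw * wNorm w (a - b)) + K * wNorm w (z₁ - z₂) :=
        add_le_add (mul_le_mul_of_nonneg_left (norm_succ_mul_le_wNorm hw hLw hab k) hc)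
          (mul_le_mul_of_nonneg_left (norm_mul_le_wNorm hz k) hK)
    _ = c * Lw * wNorm w (a - b) + K * wNorm w (z₁ - z₂) := by ring

lemma wNorm_reservoirMap_sub_le (hw : ∀ t, 0 < w t) (hLw : ∀ t, w t / w (t + 1) ≤ Lw)
    (hc : 0 ≤ c) (hK : 0 ≤ K) (hF : ∀ x₁ ∈ DX, ∀ x₂ ∈ DX, ∀ z₁ ∈ DZ, ∀ z₂ ∈ DZ,
      ‖F x₁ z₁ - F x₂ z₂‖ ≤ c * ‖x₁ - x₂‖ + K * ‖z₁ - z₂‖)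
    {z₁ z₂ : ℕ → Z} (hz₁ : z₁ ∈ lwSet w DZ) (hz₂ : z₂ ∈ lwSet w DZ)
    {a b : ℕ → X} (ha : a ∈ lwSet w DX) (hb : b ∈ lwSet w DX) :
    wNorm w (reservoirMap F z₁ a - reservoirMap F z₂ b) ≤
      c * Lw * wNorm w (a - b) + K * wNorm w (z₁ - z₂) :=
  have hw' : ∀ t, 0 ≤ w t := fun t => (hw t).le
  wNorm_le_of_forall_le <| norm_reservoirMap_sub_mul_le hw hLw hc hK hF hz₁.1 hz₂.1
    (hz₁.2.sub hw' hz₂.2) ha.1 hb.1 (ha.2.sub hw' hb.2)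

lemma mapsTo_reservoirMap (hw : ∀ t, 0 < w t) (hLw : ∀ t, w t / w (t + 1) ≤ Lw)
    (hc : 0 ≤ c) (hK : 0 ≤ K) (hF : ∀ x₁ ∈ DX, ∀ x₂ ∈ DX, ∀ z₁ ∈ DZ, ∀ z₂ ∈ DZ,
      ‖F x₁ z₁ - F x₂ z₂‖ ≤ c * ‖x₁ - x₂‖ + K * ‖z₁ - z₂‖)
    (hmap : ∀ x ∈ DX, ∀ z ∈ DZ, F x z ∈ DX) {x₀ : ℕ → X} {z₀ z : ℕ → Z}
    (hx₀ : x₀ ∈ lwSet w DX) (hz₀ : z₀ ∈ lwSet w DZ) (hsol : IsFixedPt (reservoirMap F z₀) x₀)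
    (hz : z ∈ lwSet w DZ) : MapsTo (reservoirMap F z) (lwSet w DX) (lwSet w DX) := by
  intro a ha
  have hw' : ∀ t, 0 ≤ w t := fun t => (hw t).le
  have hdiff : memLw w (reservoirMap F z a - reservoirMap F z₀ x₀) :=
    memLw_of_forall_le <| norm_reservoirMap_sub_mul_le hw hLw hc hK hF hz.1 hz₀.1
      (hz.2.sub hw' hz₀.2) ha.1 hx₀.1 (ha.2.sub hw' hx₀.2)
  refine ⟨fun k => hmap _ (ha.1 _) _ (hz.1 k), ?_⟩
  simpa only [hsol.eq, sub_add_cancel] using hdiff.add hw' hx₀.2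

lemma wNorm_sub_mul_le_of_isFixedPt (hw : ∀ t, 0 < w t) (hLw : ∀ t, w t / w (t + 1) ≤ Lw)
    (hc : 0 ≤ c) (hK : 0 ≤ K) (hF : ∀ x₁ ∈ DX, ∀ x₂ ∈ DX, ∀ z₁ ∈ DZ, ∀ z₂ ∈ DZ,
      ‖F x₁ z₁ - F x₂ z₂‖ ≤ c * ‖x₁ - x₂‖ + K * ‖z₁ - z₂‖)
    {z₁ z₂ : ℕ → Z} (hz₁ : z₁ ∈ lwSet w DZ) (hz₂ : z₂ ∈ lwSet w DZ)
    {a b : ℕ → X} (ha : a ∈ lwSet w DX) (hb : b ∈ lwSet w DX)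
    (hfa : IsFixedPt (reservoirMap F z₁) a) (hfb : IsFixedPt (reservoirMap F z₂) b) :
    wNorm w (a - b) * (1 - c * Lw) ≤ K * wNorm w (z₁ - z₂) := by
  have h := wNorm_reservoirMap_sub_le hw hLw hc hK hF hz₁ hz₂ ha hb
  rw [hfa.eq, hfb.eq] at h
  linarith

lemma existsUnique_isFixedPt_reservoirMap (hw : ∀ t, 0 < w t)
    (hLw : ∀ t, w t / w (t + 1) ≤ Lw) (hc : 0 ≤ c) (hK : 0 ≤ K) (hcLw : c * Lw < 1)
    (hF : ∀ x₁ ∈ DX, ∀ x₂ ∈ DX, ∀ z₁ ∈ DZ, ∀ z₂ ∈ DZ,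
      ‖F x₁ z₁ - F x₂ z₂‖ ≤ c * ‖x₁ - x₂‖ + K * ‖z₁ - z₂‖)
    (hmap : ∀ x ∈ DX, ∀ z ∈ DZ, F x z ∈ DX)
    (hcomplete : ∀ u : ℕ → ℕ → X, (∀ m, u m ∈ lwSet w DX) →
      (∀ ε : ℝ, 0 < ε → ∃ M, ∀ p ≥ M, ∀ r ≥ M, wNorm w (u p - u r) < ε) →
      ∃ x ∈ lwSet w DX, Tendsto (fun m => wNorm w (u m - x)) atTop (𝓝 0))
    {x₀ : ℕ → X} {z₀ z : ℕ → Z} (hx₀ : x₀ ∈ lwSet w DX) (hz₀ : z₀ ∈ lwSet w DZ)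
    (hsol : IsFixedPt (reservoirMap F z₀) x₀) (hz : z ∈ lwSet w DZ) :
    ∃! x, x ∈ lwSet w DX ∧ IsFixedPt (reservoirMap F z) x := by
  refine existsUnique_isFixedPt_of_contracting hw (fun a ha => ha.2) hcomplete
    (mapsTo_reservoirMap hw hLw hc hK hF hmap hx₀ hz₀ hsol hz) (fun a ha b hb => ?_)
    (mul_nonneg hc ((div_nonneg (hw 0).le (hw 1).le).trans (hLw 0))) hcLw ⟨x₀, hx₀⟩
  simpa only [wNorm_sub_self, mul_zero, add_zero] using
    wNorm_reservoirMap_sub_le hw hLw hc hK hF hz hz ha hb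

end Reservoir

theorem echo_state_and_fmp_general (n N : ℕ) (Dn : Set (Fin n → ℝ)) (DN : Set (Fin N → ℝ))
    (F : (Fin N → ℝ) → (Fin n → ℝ) → (Fin N → ℝ))
    (hmap : ∀ x ∈ DN, ∀ z ∈ Dn, F x z ∈ DN)
    (cF : ℝ) (hLipF : ∀ x1 ∈ DN, ∀ x2 ∈ DN, ∀ z1 ∈ Dn, ∀ z2 ∈ Dn,
      ‖F x1 z1 - F x2 z2‖ ≤ cF * (‖x1 - x2‖ + ‖z1 - z2‖))
    (c : ℝ) (hc0 : 0 < c)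
    (hcontr : ∀ x1 ∈ DN, ∀ x2 ∈ DN, ∀ z ∈ Dn, ‖F x1 z - F x2 z‖ ≤ c * ‖x1 - x2‖)
    (w : ℕ → ℝ) (hw : IsWeighting w)
    (Lw : ℝ) (hLw : ∀ t, w t / w (t + 1) ≤ Lw) (hcLw : c * Lw < 1)
    -- completeness of `(DN)^{ℤ₋} ∩ ℓ^w_-(ℝᴺ)` for the weighted norm
    (hcomplete : ∀ u : ℕ → (ℕ → (Fin N → ℝ)),
      (∀ m, (∀ t, u m t ∈ DN) ∧ memLw w (u m)) →
      (∀ ε : ℝ, 0 < ε → ∃ M, ∀ p ≥ M, ∀ q ≥ M, wNorm w (u p - u q) < ε) →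
      ∃ x : ℕ → (Fin N → ℝ), ((∀ t, x t ∈ DN) ∧ memLw w x) ∧
        Tendsto (fun m => wNorm w (u m - x)) atTop (nhds 0))
    (Vn : Set (ℕ → (Fin n → ℝ)))
    (hVn : ∀ z ∈ Vn, (∀ t, z t ∈ Dn) ∧ memLw w z)
    -- a preexisting solution of the reservoir system
    (x0 : ℕ → (Fin N → ℝ)) (z0 : ℕ → (Fin n → ℝ))
    (hx0 : (∀ t, x0 t ∈ DN) ∧ memLw w x0) (hz0 : z0 ∈ Vn)
    (hsol : ∀ k, x0 k = F (x0 (k + 1)) (z0 k)) :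
    -- echo state property on `Vn` ...
    (∀ z ∈ Vn, ∃! x : ℕ → (Fin N → ℝ),
      ((∀ t, x t ∈ DN) ∧ memLw w x) ∧ ∀ k, x k = F (x (k + 1)) (z k)) ∧
    -- ... and continuity of the induced reservoir filter w.r.t. `‖·‖_w`
    (∀ z ∈ Vn, ∀ x : ℕ → (Fin N → ℝ),
      ((∀ t, x t ∈ DN) ∧ memLw w x) → (∀ k, x k = F (x (k + 1)) (z k)) →
      ∀ ε : ℝ, 0 < ε → ∃ δ > (0 : ℝ), ∀ z' ∈ Vn, ∀ x' : ℕ → (Fin N → ℝ),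
        ((∀ t, x' t ∈ DN) ∧ memLw w x') → (∀ k, x' k = F (x' (k + 1)) (z' k)) →
        wNorm w (z - z') < δ → wNorm w (x - x') < ε) := by
  obtain ⟨-, hwpos, -⟩ := hw
  set K := max cF 1
  have hK : 0 < K := lt_max_of_lt_right one_pos
  have hF := norm_sub_le_of_contracting_of_lipschitz hcontr hLipF (le_max_left cF 1)
  refine ⟨fun z hz => ?_, fun z hz x hx hxsol ε hε => ?_⟩
  · simpa only [isFixedPt_reservoirMap_iff, lwSet, mem_ofPred_eq] using
      existsUnique_isFixedPt_reservoirMap hwpos hLw hc0.le hK.le hcLw hF hmap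
        hcomplete hx0 (hVn z0 hz0) (isFixedPt_reservoirMap_iff.2 hsol) (hVn z hz)
  · refine ⟨ε * (1 - c * Lw) / K, by have := sub_pos.2 hcLw; positivity,
      fun z' hz' x' hx' hx'sol hzz' => ?_⟩
    have hlip := wNorm_sub_mul_le_of_isFixedPt hwpos hLw hc0.le hK.le hF (hVn z hz) (hVn z' hz')
      hx hx' (isFixedPt_reservoirMap_iff.2 hxsol) (isFixedPt_reservoirMap_iff.2 hx'sol)
    have hδ : K * wNorm w (z - z') < ε * (1 - c * Lw) := by
      rwa [lt_div_iff₀ hK, mul_comm] at hzz'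
    exact lt_of_mul_lt_mul_right (hlip.trans_lt hδ) (sub_pos.2 hcLw).le

/-- Echo state property and continuity of the reservoir filter for Lipschitz
reservoir maps that are contractions in the state variable, with `c L_w < 1`, for
inputs that are not necessarily bounded. In our indexing `k : ℕ` stands for time
`-k`, so the reservoir equation `x_t = F(x_{t-1}, z_t)` reads
`x k = F (x (k+1)) (z k)`. -/
theorem echo_state_and_fmp (n N : ℕ) (Dn : Set (Fin n → ℝ)) (DN : Set (Fin N → ℝ))
    (F : (Fin N → ℝ) → (Fin n → ℝ) → (Fin N → ℝ))
    (hmap : ∀ x ∈ DN, ∀ z ∈ Dn, F x z ∈ DN)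
    (cF : ℝ) (hLipF : ∀ x1 ∈ DN, ∀ x2 ∈ DN, ∀ z1 ∈ Dn, ∀ z2 ∈ Dn,
      ‖F x1 z1 - F x2 z2‖ ≤ cF * (‖x1 - x2‖ + ‖z1 - z2‖))
    (c : ℝ) (hc0 : 0 < c) (hc1 : c < 1)
    (hcontr : ∀ x1 ∈ DN, ∀ x2 ∈ DN, ∀ z ∈ Dn, ‖F x1 z - F x2 z‖ ≤ c * ‖x1 - x2‖)
    (w : ℕ → ℝ) (hw : IsWeighting w)
    (Lw : ℝ) (hLw : ∀ t, w t / w (t + 1) ≤ Lw) (hcLw : c * Lw < 1)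
    -- completeness of `(DN)^{ℤ₋} ∩ ℓ^w_-(ℝᴺ)` for the weighted norm
    (hcomplete : ∀ u : ℕ → (ℕ → (Fin N → ℝ)),
      (∀ m, (∀ t, u m t ∈ DN) ∧ memLw w (u m)) →
      (∀ ε : ℝ, 0 < ε → ∃ M, ∀ p ≥ M, ∀ q ≥ M, wNorm w (u p - u q) < ε) →
      ∃ x : ℕ → (Fin N → ℝ), ((∀ t, x t ∈ DN) ∧ memLw w x) ∧
        Tendsto (fun m => wNorm w (u m - x)) atTop (nhds 0))
    (Vn : Set (ℕ → (Fin n → ℝ)))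
    (hVn : ∀ z ∈ Vn, (∀ t, z t ∈ Dn) ∧ memLw w z)
    (hVninv : ∀ k : ℕ, (fun z : ℕ → (Fin n → ℝ) => fun j => z (j + k)) '' Vn = Vn)
    -- a preexisting solution of the reservoir system
    (x0 : ℕ → (Fin N → ℝ)) (z0 : ℕ → (Fin n → ℝ))
    (hx0 : (∀ t, x0 t ∈ DN) ∧ memLw w x0) (hz0 : z0 ∈ Vn)
    (hsol : ∀ k, x0 k = F (x0 (k + 1)) (z0 k)) :
    -- echo state property on `Vn` ...
    (∀ z ∈ Vn, ∃! x : ℕ → (Fin N → ℝ),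
      ((∀ t, x t ∈ DN) ∧ memLw w x) ∧ ∀ k, x k = F (x (k + 1)) (z k)) ∧
    -- ... and continuity of the induced reservoir filter w.r.t. `‖·‖_w`
    (∀ z ∈ Vn, ∀ x : ℕ → (Fin N → ℝ),
      ((∀ t, x t ∈ DN) ∧ memLw w x) → (∀ k, x k = F (x (k + 1)) (z k)) →
      ∀ ε : ℝ, 0 < ε → ∃ δ > (0 : ℝ), ∀ z' ∈ Vn, ∀ x' : ℕ → (Fin N → ℝ),
        ((∀ t, x' t ∈ DN) ∧ memLw w x') → (∀ k, x' k = F (x' (k + 1)) (z' k)) →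
        wNorm w (z - z') < δ → wNorm w (x - x') < ε) :=
  echo_state_and_fmp_general n N Dn DN F hmap cF hLipF c hc0 hcontr w hw Lw hLw hcLw hcomplete Vn
    hVn x0 z0 hx0 hz0 hsol
end

section
/- Under the global differentiability hypotheses (F ∈ C¹ with L_{F_x} := sup ‖D_x F‖ and L_{F_z} := sup ‖D_z F‖ finite, and L_{F_x} · L_w < 1), the derivative of the global reservoir filter U^F at any input z ∈ ℓ^w_-(ℝⁿ) satisfies the operator-norm bound ‖D U^F(z)‖_{op,w} ≤ L_{F_z} / (1 − L_{F_x} L_w); consequently for each coordinate direction the partial derivative of the reservoir functional obeys ‖D_{z_t^i} H^F(z)‖ ≤ (L_{F_z}/(1 − L_{F_x}L_w)) · w_{-t}, a sequence decreasing to 0 as t → −∞ (differential uniform input forgetting property). -/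
/-!
Write `S = ‖DU^F(z) u‖_w`. Differentiating the recursion `x_k = F(x_{k+1}, z_k)` gives
`‖DU_k‖ ≤ L_Fx ‖DU_{k+1}‖ + L_Fz ‖u_k‖`, and `w_{-k} ≤ L_w w_{-k-1}` turns this into
`S ≤ L_Fx L_w S + L_Fz ‖u‖_w`. Since `S` is finite, `L_Fx L_w < 1` yields the operator bound.
The partial derivatives follow because `‖e^{i,t}‖_w = w_{-t}` and `w_0 = 1`.
-/

open Filter
open scoped ENNReal NNReal

section WeightedNorm

variable {E G : Type*} [NormedAddCommGroup E] [NormedAddCommGroup G] {w : ℕ → ℝ}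

theorem norm_mul_le_wNorm_s19 {z : ℕ → E} (hz : memLw w z) (t : ℕ) :
    ‖z t‖ * w t ≤ wNorm w z :=
  le_ciSup hz t

theorem wNorm_le {z : ℕ → E} {C : ℝ} (h : ∀ t, ‖z t‖ * w t ≤ C) : wNorm w z ≤ C :=
  ciSup_le h

theorem norm_single_mul_le (hw : ∀ t, 0 ≤ w t) (t : ℕ) (v : E) (s : ℕ) :
    ‖(Pi.single t v : ℕ → E) s‖ * w s ≤ ‖v‖ * w t := by
  rcases eq_or_ne s t with rfl | hs
  · simp
  · simpa [Pi.single_apply, hs] using mul_nonneg (norm_nonneg v) (hw t)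

theorem memLw_single (hw : ∀ t, 0 ≤ w t) (t : ℕ) (v : E) : memLw w (Pi.single t v) :=
  ⟨‖v‖ * w t, Set.forall_mem_range.2 (norm_single_mul_le hw t v)⟩

theorem wNorm_single (hw : ∀ t, 0 ≤ w t) (t : ℕ) (v : E) :
    wNorm w (Pi.single t v) = ‖v‖ * w t :=
  le_antisymm (wNorm_le (norm_single_mul_le hw t v))
    (by simpa using norm_mul_le_wNorm_s19 (memLw_single hw t v) t)

theorem wNorm_le_of_norm_le_mul_succ_add {x : ℕ → E} {u : ℕ → G} {a b L : ℝ}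
    (hw : ∀ k, 0 < w k) (hwL : ∀ k, w k ≤ L * w (k + 1)) (ha : 0 ≤ a) (hb : 0 ≤ b)
    (haL : a * L < 1) (hx : memLw w x) (hu : memLw w u)
    (hrec : ∀ k, ‖x k‖ ≤ a * ‖x (k + 1)‖ + b * ‖u k‖) :
    wNorm w x ≤ b / (1 - a * L) * wNorm w u := by
  have hL : 0 ≤ L := nonneg_of_mul_nonneg_left ((hw 0).le.trans (hwL 0)) (hw 1)
  have hS : wNorm w x ≤ a * L * wNorm w x + b * wNorm w u := wNorm_le fun k =>
    calc ‖x k‖ * w k ≤ (a * ‖x (k + 1)‖ + b * ‖u k‖) * w k :=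
          mul_le_mul_of_nonneg_right (hrec k) (hw k).le
      _ = a * (‖x (k + 1)‖ * w k) + b * (‖u k‖ * w k) := by ring
      _ ≤ a * (‖x (k + 1)‖ * (L * w (k + 1))) + b * wNorm w u := by
          gcongr
          · exact hwL k
          · exact norm_mul_le_wNorm_s19 hu k
      _ = a * L * (‖x (k + 1)‖ * w (k + 1)) + b * wNorm w u := by ring
      _ ≤ a * L * wNorm w x + b * wNorm w u := by
          gcongr
          exact norm_mul_le_wNorm_s19 hx (k + 1)
  rw [div_mul_eq_mul_div, le_div_iff₀ (by linarith)]
  linarith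

end WeightedNorm

theorem differential_input_forgetting_general (n N : ℕ)
    (F : (Fin N → ℝ) → (Fin n → ℝ) → (Fin N → ℝ))
    (LFx LFz : ℝ)
    (hLFx : ∀ x z, ‖fderiv ℝ (fun x' => F x' z) x‖ ≤ LFx)
    (hLFz : ∀ x z, ‖fderiv ℝ (fun z' => F x z') z‖ ≤ LFz)
    (w : ℕ → ℝ) (hw : IsWeighting w)
    (Lw : ℝ) (hLw : ∀ t, w t / w (t + 1) ≤ Lw) (hcond : LFx * Lw < 1)
    (UF : (ℕ → (Fin n → ℝ)) → (ℕ → (Fin N → ℝ)))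
    (DU : (ℕ → (Fin n → ℝ)) → (ℕ → (Fin n → ℝ)) → (ℕ → (Fin N → ℝ)))
    (hDUmem : ∀ z u, memLw w z → memLw w u → memLw w (DU z u))
    (hDUrec : ∀ z u, memLw w z → memLw w u → ∀ k,
      DU z u k
        = fderiv ℝ (fun x' => F x' (z k)) (UF z (k + 1)) (DU z u (k + 1))
          + fderiv ℝ (fun z' => F (UF z (k + 1)) z') (z k) (u k)) :
    (∀ z u, memLw w z → memLw w u →
      wNorm w (DU z u) ≤ (LFz / (1 - LFx * Lw)) * wNorm w u) ∧
    (∀ z, memLw w z → ∀ t : ℕ, ∀ i : Fin n,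
      ‖DU z (fun s => if s = t then Pi.single i 1 else 0) 0‖
        ≤ (LFz / (1 - LFx * Lw)) * w t) ∧
    Tendsto (fun t => (LFz / (1 - LFx * Lw)) * w t) atTop (nhds 0) := by
  obtain ⟨-, hpos, -, hw0, htend⟩ := hw
  have hwL : ∀ k, w k ≤ Lw * w (k + 1) := fun k => (div_le_iff₀ (hpos (k + 1))).1 (hLw k)
  have hop : ∀ z u, memLw w z → memLw w u →
      wNorm w (DU z u) ≤ (LFz / (1 - LFx * Lw)) * wNorm w u := fun z u hz hu =>
    wNorm_le_of_norm_le_mul_succ_add hpos hwL ((norm_nonneg _).trans (hLFx 0 0))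
      ((norm_nonneg _).trans (hLFz 0 0)) hcond (hDUmem z u hz hu) hu fun k => by
        rw [hDUrec z u hz hu k]
        exact (norm_add_le _ _).trans (add_le_add
          (ContinuousLinearMap.le_of_opNorm_le _ (hLFx _ _) _)
          (ContinuousLinearMap.le_of_opNorm_le _ (hLFz _ _) _))
  refine ⟨hop, fun z hz t i => ?_, by simpa using htend.const_mul (LFz / (1 - LFx * Lw))⟩
  have hnonneg : ∀ t, 0 ≤ w t := fun t => (hpos t).le
  set e : Fin n → ℝ := Pi.single i 1
  have he : (fun s => if s = t then e else 0) = Pi.single t e :=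
    funext fun s => (Pi.single_apply _ _ _).symm
  have hmem : memLw w (Pi.single t e) := memLw_single hnonneg t e
  rw [he]
  calc ‖DU z (Pi.single t e) 0‖ ≤ wNorm w (DU z (Pi.single t e)) := by
        simpa [hw0] using norm_mul_le_wNorm_s19 (hDUmem z _ hz hmem) 0
    _ ≤ (LFz / (1 - LFx * Lw)) * w t := by
        simpa [e, wNorm_single hnonneg, Pi.norm_single] using hop z _ hz hmem

/-- Differential uniform input forgetting property. Let `F` be a `C¹` reservoir map
with uniformly bounded partial derivatives `‖D_x F‖ ≤ L_Fx`, `‖D_z F‖ ≤ L_Fz` and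
`L_Fx · L_w < 1`. Let `U^F` be the reservoir filter (solving `x k = F (x (k+1)) (z k)`,
with `k : ℕ` standing for time `-k`, and preserving `ℓ^w`), and let `DU z` be its
derivative at `z`, characterized by the differentiated reservoir recursion and
mapping `ℓ^w` to `ℓ^w`. Then `‖DU^F(z)‖_{op,w} ≤ L_Fz / (1 - L_Fx L_w)`, so each
partial derivative of the reservoir functional `H^F(z) = U^F(z)_0` in the direction
`e^{i,t}` is bounded by `(L_Fz / (1 - L_Fx L_w)) · w_{-t}`, a sequence tending to
zero as the time `-t` goes to `-∞`. -/
theorem differential_input_forgetting (n N : ℕ)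
    (F : (Fin N → ℝ) → (Fin n → ℝ) → (Fin N → ℝ))
    (hF : ContDiff ℝ 1 (fun p : (Fin N → ℝ) × (Fin n → ℝ) => F p.1 p.2))
    (LFx LFz : ℝ)
    (hLFx : ∀ x z, ‖fderiv ℝ (fun x' => F x' z) x‖ ≤ LFx)
    (hLFz : ∀ x z, ‖fderiv ℝ (fun z' => F x z') z‖ ≤ LFz)
    (w : ℕ → ℝ) (hw : IsWeighting w)
    (Lw : ℝ) (hLw : ∀ t, w t / w (t + 1) ≤ Lw) (hcond : LFx * Lw < 1)
    (UF : (ℕ → (Fin n → ℝ)) → (ℕ → (Fin N → ℝ)))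
    (hUFmem : ∀ z, memLw w z → memLw w (UF z))
    (hUFsol : ∀ z, memLw w z → ∀ k, UF z k = F (UF z (k + 1)) (z k))
    (DU : (ℕ → (Fin n → ℝ)) → (ℕ → (Fin n → ℝ)) → (ℕ → (Fin N → ℝ)))
    (hDUmem : ∀ z u, memLw w z → memLw w u → memLw w (DU z u))
    (hDUrec : ∀ z u, memLw w z → memLw w u → ∀ k,
      DU z u k
        = fderiv ℝ (fun x' => F x' (z k)) (UF z (k + 1)) (DU z u (k + 1))
          + fderiv ℝ (fun z' => F (UF z (k + 1)) z') (z k) (u k)) :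
    (∀ z u, memLw w z → memLw w u →
      wNorm w (DU z u) ≤ (LFz / (1 - LFx * Lw)) * wNorm w u) ∧
    (∀ z, memLw w z → ∀ t : ℕ, ∀ i : Fin n,
      ‖DU z (fun s => if s = t then Pi.single i 1 else 0) 0‖
        ≤ (LFz / (1 - LFx * Lw)) * w t) ∧
    Tendsto (fun t => (LFz / (1 - LFx * Lw)) * w t) atTop (nhds 0) :=
  differential_input_forgetting_general n N F LFx LFz hLFx hLFz w hw Lw hLw hcond UF DU hDUmem
    hDUrec
end
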